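/- arXiv:2412.19073 — 2 statements merged into one kernel-verified Lean document; each statement's English description precedes it below -/
import Mathlib

section
/- For all non-negative integers l and n, the sum over j from 0 to l of binomial(l, j) * (l - j + 1)! * (j + n)! equals (l + n + 2)! / ((n + 1) * (n + 2)). -/
open Nat Finset

lemma aux_sum (l : ℕ) : ∀ a b : ℕ,
    (a + b + 1)! * ∑ j ∈ Finset.range (l + 1),
      Nat.choose l j * (l - j + a)! * (j + b)! = a ! * b ! * (l + a + b + 1)! := by
  induction l with
  | zero =>
    intro a b
    simp [Nat.factorial]
    ring
  | succ l ih =>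
    intro a b
    have hsplit :
        ∑ j ∈ Finset.range (l + 1 + 1),
          Nat.choose (l + 1) j * (l + 1 - j + a)! * (j + b)! =
        (∑ j ∈ Finset.range (l + 1), Nat.choose l j * (l - j + a)! * (j + (b + 1))!) +
        (∑ j ∈ Finset.range (l + 1), Nat.choose l j * (l - j + (a + 1))! * (j + b)!) := by
      rw [Finset.sum_range_succ' _ (l + 1)]
      have e1 : ∀ i ∈ Finset.range (l + 1),
          Nat.choose (l + 1) (i + 1) * (l + 1 - (i + 1) + a)! * (i + 1 + b)! =
          Nat.choose l i * (l - i + a)! * (i + (b + 1))! +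
          Nat.choose l (i + 1) * (l - i + a)! * (i + (b + 1))! := by
        intro i hi
        rw [Nat.choose_succ_succ]
        have : l + 1 - (i + 1) = l - i := by omega
        rw [this]
        have : i + 1 + b = i + (b + 1) := by omega
        rw [this]
        ring
      rw [Finset.sum_congr rfl e1, Finset.sum_add_distrib]
      have e2 : (∑ i ∈ Finset.range (l + 1),
            Nat.choose l (i + 1) * (l - i + a)! * (i + (b + 1))!) +
          Nat.choose (l + 1) 0 * (l + 1 - 0 + a)! * (0 + b)! =
          ∑ j ∈ Finset.range (l + 1), Nat.choose l j * (l - j + (a + 1))! * (j + b)! := by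
        calc (∑ i ∈ Finset.range (l + 1),
              Nat.choose l (i + 1) * (l - i + a)! * (i + (b + 1))!) +
            Nat.choose (l + 1) 0 * (l + 1 - 0 + a)! * (0 + b)!
            = (∑ i ∈ Finset.range (l + 1),
              Nat.choose l (i + 1) * (l - (i + 1) + (a + 1))! * (i + 1 + b)!) +
            Nat.choose l 0 * (l - 0 + (a + 1))! * (0 + b)! := by
              congr 1
              · apply Finset.sum_congr rfl
                intro i hi
                simp only [Finset.mem_range] at hi
                by_cases hil : i + 1 ≤ l
                · have h1 : l - (i + 1) + (a + 1) = l - i + a := by omega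
                  have h2 : i + 1 + b = i + (b + 1) := by omega
                  rw [h1, h2]
                · have : i = l := by omega
                  subst this
                  simp [Nat.choose_succ_self]
              · simp only [Nat.choose_zero_right, Nat.choose_zero_right, Nat.sub_zero, one_mul]
                have : l + 1 + a = l + (a + 1) := by omega
                rw [this]
          _ = ∑ j ∈ Finset.range (l + 1 + 1),
                Nat.choose l j * (l - j + (a + 1))! * (j + b)! :=
              (Finset.sum_range_succ'
                (fun j => Nat.choose l j * (l - j + (a + 1))! * (j + b)!) (l + 1)).symm
          _ = ∑ j ∈ Finset.range (l + 1),
                Nat.choose l j * (l - j + (a + 1))! * (j + b)! := by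
              rw [Finset.sum_range_succ]
              simp [Nat.choose_succ_self]
      rw [add_assoc, e2]
    rw [hsplit]
    have h1 := ih a (b + 1)
    have h2 := ih (a + 1) b
    apply Nat.eq_of_mul_eq_mul_left (show 0 < a + b + 2 by omega)
    have hf : (a + b + 2) * (a + b + 1)! = (a + b + 2)! :=
      (Nat.factorial_succ (a + b + 1)).symm
    calc (a + b + 2) * ((a + b + 1)! *
            ((∑ j ∈ Finset.range (l + 1), Nat.choose l j * (l - j + a)! * (j + (b + 1))!) +
             (∑ j ∈ Finset.range (l + 1), Nat.choose l j * (l - j + (a + 1))! * (j + b)!)))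
        = (a + (b + 1) + 1)! * (∑ j ∈ Finset.range (l + 1),
              Nat.choose l j * (l - j + a)! * (j + (b + 1))!) +
          ((a + 1) + b + 1)! * (∑ j ∈ Finset.range (l + 1),
              Nat.choose l j * (l - j + (a + 1))! * (j + b)!) := by
          have e3 : a + (b + 1) + 1 = a + b + 2 := by omega
          have e4 : (a + 1) + b + 1 = a + b + 2 := by omega
          rw [e3, e4, ← hf]; ring
      _ = a ! * (b + 1)! * (l + a + (b + 1) + 1)! + (a + 1)! * b ! * (l + (a + 1) + b + 1)! := by
          rw [h1, h2]
      _ = (a + b + 2) * (a ! * b ! * (l + 1 + a + b + 1)!) := by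
          have e5 : l + a + (b + 1) + 1 = l + 1 + a + b + 1 := by omega
          have e6 : l + (a + 1) + b + 1 = l + 1 + a + b + 1 := by omega
          rw [e5, e6, Nat.factorial_succ b, Nat.factorial_succ a]
          ring

theorem sum_choose_factorial_left (l n : ℕ) :
    ∑ j ∈ Finset.range (l + 1),
      Nat.choose l j * Nat.factorial (l - j + 1) * Nat.factorial (j + n) =
    Nat.factorial (l + n + 2) / ((n + 1) * (n + 2)) := by
  have h := aux_sum l 1 n
  have hf : (1 + n + 1)! = n ! * ((n + 1) * (n + 2)) := by
    have : 1 + n + 1 = n + 2 := by omega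
    rw [this, Nat.factorial_succ, Nat.factorial_succ]
    ring
  rw [hf, Nat.factorial_one, one_mul] at h
  have hkey : ((n + 1) * (n + 2)) * ∑ j ∈ Finset.range (l + 1),
      Nat.choose l j * (l - j + 1)! * (j + n)! = (l + n + 2)! := by
    have hn : 0 < n ! := Nat.factorial_pos n
    have e : l + 1 + n + 1 = l + n + 2 := by omega
    rw [e] at h
    apply Nat.eq_of_mul_eq_mul_left hn
    calc n ! * (((n + 1) * (n + 2)) * ∑ j ∈ Finset.range (l + 1),
          Nat.choose l j * (l - j + 1)! * (j + n)!)
        = n ! * ((n + 1) * (n + 2)) * ∑ j ∈ Finset.range (l + 1),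
          Nat.choose l j * (l - j + 1)! * (j + n)! := by ring
      _ = n ! * (l + n + 2)! := h
  symm
  exact Nat.div_eq_of_eq_mul_left (by positivity) (by rw [← hkey]; ring)
end

section
/- For all non-negative integers l and n, the sum over j from 0 to l of binomial(l, j) * (l - j + n)! * (j + 1)! equals (l + n + 2)! / ((n + 1) * (n + 2)). -/
open Nat Finset

-- hockey stick identity
lemma hockey (n m : ℕ) :
    ∑ i ∈ Finset.range (m + 1), Nat.choose (n + i) n = Nat.choose (n + m + 1) (n + 1) := by
  induction m with
  | zero => simp
  | succ m ih =>
      rw [Finset.sum_range_succ, ih]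
      have : n + (m + 1) + 1 = (n + m + 1) + 1 := by ring
      rw [this, Nat.choose_succ_succ' (n + m + 1) n]
      ring_nf

lemma keyB (n l : ℕ) :
    ∑ i ∈ Finset.range (l + 1), (l + 1 - i) * Nat.choose (n + i) n =
      Nat.choose (l + n + 2) (n + 2) := by
  induction l with
  | zero => simp
  | succ l ih =>
      have split : ∀ i ∈ Finset.range (l + 2),
          (l + 2 - i) * Nat.choose (n + i) n
            = (l + 1 - i) * Nat.choose (n + i) n + Nat.choose (n + i) n := by
        intro i hi
        rw [Finset.mem_range] at hi
        have : l + 2 - i = (l + 1 - i) + 1 := by omega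
        rw [this, add_mul, one_mul]
      rw [Finset.sum_congr rfl split, Finset.sum_add_distrib]
      have h1 : ∑ i ∈ Finset.range (l + 2), (l + 1 - i) * Nat.choose (n + i) n
          = ∑ i ∈ Finset.range (l + 1), (l + 1 - i) * Nat.choose (n + i) n := by
        rw [Finset.sum_range_succ]
        simp
      rw [h1, ih, hockey n (l + 1)]
      have e1 : l + 1 + n + 2 = (l + n + 2) + 1 := by ring
      have e2 : n + (l + 1) + 1 = (l + n + 2) := by ring
      rw [e1, e2, Nat.choose_succ_succ' (l + n + 2) (n + 1)]
      ring_nf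

theorem sum_choose_factorial_right (l n : ℕ) :
    ∑ j ∈ Finset.range (l + 1),
      Nat.choose l j * Nat.factorial (l - j + n) * Nat.factorial (j + 1) =
    Nat.factorial (l + n + 2) / ((n + 1) * (n + 2)) := by
  have term : ∀ j ∈ Finset.range (l + 1),
      Nat.choose l j * Nat.factorial (l - j + n) * Nat.factorial (j + 1)
        = Nat.factorial l * Nat.factorial n * ((j + 1) * Nat.choose (n + (l - j)) n) := by
    intro j hj
    rw [Finset.mem_range] at hj
    have hjl : j ≤ l := by omega
    have h1 : Nat.choose l j * Nat.factorial j * Nat.factorial (l - j) = Nat.factorial l :=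
      Nat.choose_mul_factorial_mul_factorial hjl
    have h2 : Nat.choose (n + (l - j)) n * Nat.factorial n * Nat.factorial (l - j)
        = Nat.factorial (n + (l - j)) := by
      have := Nat.choose_mul_factorial_mul_factorial (Nat.le_add_right n (l - j))
      simpa using this
    have e : l - j + n = n + (l - j) := by ring
    rw [e, ← h1, ← h2]
    rw [Nat.factorial_succ j]
    ring
  rw [Finset.sum_congr rfl term, ← Finset.mul_sum]
  have reflect : ∑ j ∈ Finset.range (l + 1), (j + 1) * Nat.choose (n + (l - j)) n
      = ∑ i ∈ Finset.range (l + 1), (l + 1 - i) * Nat.choose (n + i) n := by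
    rw [← Finset.sum_range_reflect (fun i => (l + 1 - i) * Nat.choose (n + i) n) (l + 1)]
    apply Finset.sum_congr rfl
    intro j hj
    rw [Finset.mem_range] at hj
    congr 1
    omega
  rw [reflect, keyB n l]
  -- now handle division
  have hfac : Nat.factorial (l + n + 2)
      = Nat.factorial l * Nat.factorial n * Nat.choose (l + n + 2) (n + 2) * ((n + 1) * (n + 2)) := by
    have h : Nat.choose (l + n + 2) (n + 2) * Nat.factorial (n + 2) * Nat.factorial l
        = Nat.factorial (l + n + 2) := by
      have hle : n + 2 ≤ l + n + 2 := by omega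
      have := Nat.choose_mul_factorial_mul_factorial hle
      have e : l + n + 2 - (n + 2) = l := by omega
      rw [e] at this
      exact this
    rw [← h]
    rw [show Nat.factorial (n + 2) = Nat.factorial n * ((n + 1) * (n + 2)) by
      rw [Nat.factorial_succ, Nat.factorial_succ]; ring]
    ring
  rw [hfac, Nat.mul_div_cancel _ (by positivity)]
end
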